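/- arXiv:2212.14700 — 5 statements merged into one kernel-verified Lean document; each statement's English description precedes it below -/
import Mathlib

section
/- Let $\rho$ be a positive semidefinite matrix on $\mathbb{C}^d$ and let $E_1, \dots, E_k$ be mutually orthogonal projections with $\sum_{i=1}^k E_i = I$. Then $\rho \leq k \sum_{i=1}^k E_i \rho E_i$ (Hayashi's pinching inequality). -/
/-!
For `0 ≤ a`, the gap `n • ∑ xᵢ⋆ a xᵢ - (∑ xᵢ)⋆ a (∑ xᵢ)` equals `∑_{i<j} (xᵢ - xⱼ)⋆ a (xᵢ - xⱼ)`,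
a sum of conjugates of `a`, so it is nonnegative in any star-ordered ring. Taking `xᵢ = Eᵢ`
with `∑ Eᵢ = 1` gives the pinching inequality.
-/

open ComplexOrder

section StarOrderedRing

variable {R ι : Type*}

theorem star_sum_mul_mul_sum_le_card_nsmul_sum [NonUnitalRing R] [PartialOrder R] [StarRing R]
    [StarOrderedRing R] {a : R} (ha : 0 ≤ a) (s : Finset ι) (x : ι → R) :
    star (∑ i ∈ s, x i) * a * ∑ i ∈ s, x i ≤ s.card • ∑ i ∈ s, star (x i) * a * x i := by
  classical
  induction s using Finset.induction_on with
  | empty => simp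
  | insert b s hb ih =>
    set S := ∑ i ∈ s, x i
    set Q := ∑ i ∈ s, star (x i) * a * x i
    have hcross : ∑ i ∈ s, star (x i - x b) * a * (x i - x b) =
        Q - star S * a * x b - star (x b) * a * S + s.card • (star (x b) * a * x b) := by
      simp only [S, Q, star_sub, sub_mul, mul_sub, Finset.sum_sub_distrib, star_sum,
        Finset.sum_mul, Finset.mul_sum, Finset.sum_const]
      abel
    have hgap : (s.card + 1) • (star (x b) * a * x b + Q) - star (x b + S) * a * (x b + S) =
        (s.card • Q - star S * a * S) + ∑ i ∈ s, star (x i - x b) * a * (x i - x b) := by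
      rw [hcross, star_add, add_smul, one_smul, smul_add]
      noncomm_ring
    rw [Finset.sum_insert hb, Finset.sum_insert hb, Finset.card_insert_of_notMem hb,
      ← sub_nonneg, hgap]
    exact add_nonneg (sub_nonneg.2 ih) (Finset.sum_nonneg fun i _ => star_left_conjugate_nonneg ha _)

theorem le_card_nsmul_sum_mul_mul_of_sum_eq_one [Ring R] [PartialOrder R] [StarRing R]
    [StarOrderedRing R] [Fintype ι] {a : R} (ha : 0 ≤ a) {e : ι → R}
    (he : ∀ i, IsSelfAdjoint (e i)) (hsum : ∑ i, e i = 1) :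
    a ≤ Fintype.card ι • ∑ i, e i * a * e i := by
  simpa [hsum, (he _).star_eq] using star_sum_mul_mul_sum_le_card_nsmul_sum ha Finset.univ e

end StarOrderedRing

theorem pinching_inequality_general {d k : ℕ} (ρ : Matrix (Fin d) (Fin d) ℂ)
    (hρ : ρ.PosSemidef)
    (E : Fin k → Matrix (Fin d) (Fin d) ℂ)
    (hherm : ∀ i, (E i).IsHermitian)
    (hsum : ∑ i, E i = 1) :
    Matrix.PosSemidef ((k : ℂ) • (∑ i, E i * ρ * E i) - ρ) := by
  open MatrixOrder in
  have hle := le_card_nsmul_sum_mul_mul_of_sum_eq_one hρ.nonneg hherm hsum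
  rwa [Fintype.card_fin, ← Nat.cast_smul_eq_nsmul ℂ, Matrix.le_iff] at hle

/-- Hayashi's pinching inequality: `ρ ≤ k • ∑ i, E i * ρ * E i` for a projective
measurement `E` with `k` outcomes. -/
theorem pinching_inequality {d k : ℕ} (ρ : Matrix (Fin d) (Fin d) ℂ)
    (hρ : ρ.PosSemidef)
    (E : Fin k → Matrix (Fin d) (Fin d) ℂ)
    (hherm : ∀ i, (E i).IsHermitian)
    (hproj : ∀ i, E i * E i = E i)
    (horth : ∀ i j, i ≠ j → E i * E j = 0)
    (hsum : ∑ i, E i = 1) :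
    Matrix.PosSemidef ((k : ℂ) • (∑ i, E i * ρ * E i) - ρ) :=
  pinching_inequality_general ρ hρ E hherm hsum
end

section
/- Let $\rho$ and $\sigma$ be positive semidefinite matrices on $\mathbb{C}^d$ with $\mathrm{tr}(\rho)=1$ and with the support of $\rho$ contained in the support of $\sigma$. Then $D_{\max}(\rho\|\sigma) = \log \sup \{ \mathrm{tr}(\rho X) : X \geq 0,\ \mathrm{tr}(\sigma X) \leq 1 \}$, where $D_{\max}(\rho\|\sigma)=\log\inf\{\lambda > 0 : \rho \leq \lambda\sigma\}$. -/
open Matrix ComplexOrder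

/-- Max relative entropy of matrices: `log₂ inf {λ > 0 : ρ ≤ λ σ}`. -/
noncomputable def Dmax {d : ℕ} (ρ σ : Matrix (Fin d) (Fin d) ℂ) : ℝ :=
  Real.logb 2 (sInf {l : ℝ | 0 < l ∧ (l • σ - ρ).PosSemidef})

/-!
Weak duality: if `ρ ≤ λσ`, `X ≥ 0` and `tr(σX) ≤ 1`, then `tr(ρX) ≤ λ tr(σX) ≤ λ`.
Conversely, the PSD cone is self-dual, so `ρ ≤ λσ` iff `tr(ρX) ≤ λ tr(σX)` for all `X ≥ 0`.
By homogeneity it suffices to test `tr(σX) = 1`, where this says that `λ` bounds the supremum,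
and `tr(σX) = 0`, where `tr(ρX) ≤ λ₀ tr(σX) = 0` for any feasible `λ₀`.
A feasible `λ₀` exists by the support condition: with `Q` the projection onto `ker σ`,
`σ + Q ≥ c > 0` and `ρ = (1 - Q)ρ(1 - Q)`, so `ρ ≤ r` sandwiches to `ρ ≤ (r/c)σ`.
-/

open scoped MatrixOrder

theorem sInf_setOf_forall_le_mul_eq_sSup {E : Type*} [AddCommGroup E] [Module ℝ E] {K : Set E}
    (hK₀ : 0 ∈ K) (hK : ∀ x ∈ K, ∀ t : ℝ, 0 < t → t • x ∈ K) (f g : E →ₗ[ℝ] ℝ)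
    (hg : ∀ x ∈ K, 0 ≤ g x) (hfeas : ∃ l > 0, ∀ x ∈ K, f x ≤ l * g x) :
    sInf {l : ℝ | 0 < l ∧ ∀ x ∈ K, f x ≤ l * g x} = sSup {r | ∃ x ∈ K, g x ≤ 1 ∧ r = f x} := by
  set A := {l : ℝ | 0 < l ∧ ∀ x ∈ K, f x ≤ l * g x}
  set B := {r | ∃ x ∈ K, g x ≤ 1 ∧ r = f x}
  obtain ⟨l₀, hl₀⟩ := hfeas
  have hweak : ∀ l ∈ A, ∀ r ∈ B, r ≤ l := by
    rintro l ⟨hl, hfg⟩ _ ⟨x, hx, hgx, rfl⟩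
    calc f x ≤ l * g x := hfg x hx
      _ ≤ l := mul_le_of_le_one_right hl.le hgx
  have h0B : 0 ∈ B := ⟨0, hK₀, by simp, by simp⟩
  have hBbdd : BddAbove B := ⟨l₀, hweak l₀ hl₀⟩
  have hstrong : ∀ l > sSup B, l ∈ A := by
    refine fun l hl => ⟨(le_csSup hBbdd h0B).trans_lt hl, fun x hx => ?_⟩
    rcases (hg x hx).eq_or_lt with hgx | hgx
    · simpa [← hgx] using hl₀.2 x hx
    · have hmem : f ((g x)⁻¹ • x) ∈ B :=
        ⟨_, hK x hx _ (inv_pos.mpr hgx), by simp [hgx.ne'], rfl⟩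
      have := (le_csSup hBbdd hmem).trans_lt hl
      rw [map_smul, smul_eq_mul, inv_mul_lt_iff₀ hgx, mul_comm] at this
      exact this.le
  exact le_antisymm
    (le_of_forall_gt_imp_ge_of_dense fun l hl => csInf_le ⟨0, fun _ h => h.1.le⟩ (hstrong l hl))
    (le_csInf ⟨l₀, hl₀⟩ fun l hl => csSup_le ⟨0, h0B⟩ (hweak l hl))

namespace Matrix

variable {n 𝕜 : Type*} [Fintype n] [RCLike 𝕜]

theorem PosSemidef.trace_mul_nonneg {A B : Matrix n n 𝕜} (hA : A.PosSemidef)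
    (hB : B.PosSemidef) : 0 ≤ (A * B).trace := by
  classical
  obtain ⟨C, rfl⟩ := CStarAlgebra.nonneg_iff_eq_star_mul_self.mp hB.nonneg
  rw [← Matrix.mul_assoc, trace_mul_comm]
  simpa [Matrix.mul_assoc, star_eq_conjTranspose] using
    (hA.mul_mul_conjTranspose_same C).trace_nonneg

theorem IsHermitian.posSemidef_iff_forall_re_trace_mul_nonneg {M : Matrix n n 𝕜}
    (hM : M.IsHermitian) :
    M.PosSemidef ↔ ∀ X : Matrix n n 𝕜, X.PosSemidef → 0 ≤ RCLike.re (M * X).trace := by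
  refine ⟨fun h X hX => (RCLike.nonneg_iff.mp (h.trace_mul_nonneg hX)).1, fun h => ?_⟩
  refine PosSemidef.of_dotProduct_mulVec_nonneg hM fun v =>
    RCLike.nonneg_iff.mpr ⟨?_, hM.im_star_dotProduct_mulVec_self v⟩
  simpa [mul_vecMulVec, dotProduct_comm] using h _ (posSemidef_vecMulVec_self_star v)

theorem IsHermitian.le_iff_forall_re_trace_mul_le {A B : Matrix n n 𝕜} (hA : A.IsHermitian)
    (hB : B.IsHermitian) :
    A ≤ B ↔ ∀ X : Matrix n n 𝕜, X.PosSemidef →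
      RCLike.re (A * X).trace ≤ RCLike.re (B * X).trace := by
  rw [le_iff, (hB.sub hA).posSemidef_iff_forall_re_trace_mul_nonneg]
  simp [Matrix.sub_mul, trace_sub]

noncomputable def reTraceMul (A : Matrix n n ℂ) : Matrix n n ℂ →ₗ[ℝ] ℝ :=
  Complex.reLm ∘ₗ traceLinearMap n ℝ ℂ ∘ₗ LinearMap.mulLeft ℝ A

@[simp]
theorem reTraceMul_apply (A X : Matrix n n ℂ) : A.reTraceMul X = (A * X).trace.re := rfl

section kerProjection

variable [DecidableEq n]

noncomputable def kerProjection (A : Matrix n n 𝕜) : Matrix n n 𝕜 :=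
  cfc (fun x : ℝ => if x = 0 then (1 : ℝ) else 0) A

theorem isSelfAdjoint_kerProjection (A : Matrix n n 𝕜) : IsSelfAdjoint (kerProjection A) :=
  cfc_predicate _ _

theorem kerProjection_mul_self (A : Matrix n n 𝕜) :
    kerProjection A * kerProjection A = kerProjection A := by
  rw [kerProjection, ← cfc_mul _ _ _ (finite_real_spectrum.continuousOn _)
    (finite_real_spectrum.continuousOn _)]
  congr 1
  funext x
  split_ifs <;> simp

theorem mul_kerProjection {A : Matrix n n 𝕜} (hA : A.IsHermitian) : A * kerProjection A = 0 := by
  have h0 : (fun x : ℝ => x * if x = 0 then 1 else 0) = 0 := by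
    funext x
    split_ifs with h <;> simp [h]
  rw [kerProjection, ← cfc_zero ℝ A, ← h0, cfc_mul _ _ _ (finite_real_spectrum.continuousOn _)
    (finite_real_spectrum.continuousOn _), cfc_id' ℝ A]

theorem kerProjection_mul {A : Matrix n n 𝕜} (hA : A.IsHermitian) : kerProjection A * A = 0 := by
  simpa [hA.isSelfAdjoint.star_eq, (isSelfAdjoint_kerProjection A).star_eq] using
    congrArg star (mul_kerProjection hA)

theorem mul_kerProjection_of_ker_le {ρ σ : Matrix n n 𝕜} (hσ : σ.IsHermitian)
    (hker : ∀ v, σ *ᵥ v = 0 → ρ *ᵥ v = 0) : ρ * kerProjection σ = 0 := by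
  refine ext_of_mulVec_single fun i => ?_
  rw [zero_mulVec, ← mulVec_mulVec]
  exact hker _ (by rw [mulVec_mulVec, mul_kerProjection hσ, zero_mulVec])

theorem PosSemidef.exists_algebraMap_le_add_kerProjection [Nonempty n] {A : Matrix n n 𝕜}
    (hA : A.PosSemidef) : ∃ c > 0, algebraMap ℝ _ c ≤ A + kerProjection A := by
  have hcont (f : ℝ → ℝ) : ContinuousOn f (spectrum ℝ A) := finite_real_spectrum.continuousOn f
  have hsum : A + kerProjection A = cfc (fun x : ℝ => x + if x = 0 then 1 else 0) A := by
    rw [cfc_add _ _ _ (hcont _) (hcont _), cfc_id' ℝ A, kerProjection]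
  have hsa : IsSelfAdjoint (A + kerProjection A) := hA.1.add (isSelfAdjoint_kerProjection A)
  rw [CFC.exists_pos_algebraMap_le_iff hsa,
    ← StarOrderedRing.isStrictlyPositive_iff_spectrum_pos _ hsa, hsum,
    cfc_isStrictlyPositive_iff _ _ (hcont _)]
  intro x hx
  have := spectrum_nonneg_of_nonneg hA.nonneg hx
  split_ifs <;> positivity

theorem exists_le_smul_of_ker_le {ρ σ : Matrix n n 𝕜} (hρ : ρ.IsHermitian) (hσ : σ.PosSemidef)
    (hker : ∀ v, σ *ᵥ v = 0 → ρ *ᵥ v = 0) : ∃ l : ℝ, 0 < l ∧ ρ ≤ l • σ := by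
  rcases isEmpty_or_nonempty n with _ | _
  · exact ⟨1, one_pos, (Subsingleton.elim ρ _).le⟩
  have hQ : star (kerProjection σ) = kerProjection σ := (isSelfAdjoint_kerProjection σ).star_eq
  have hσQ := mul_kerProjection hσ.1
  have hQσ := kerProjection_mul hσ.1
  have hQQ := kerProjection_mul_self σ
  have hρQ := mul_kerProjection_of_ker_le hσ.1 hker
  set Q := kerProjection σ
  have hQρ : Q * ρ = 0 := by
    simpa [hρ.isSelfAdjoint.star_eq, hQ] using congrArg star hρQ
  obtain ⟨c, hc, hcσQ⟩ := hσ.exists_algebraMap_le_add_kerProjection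
  obtain ⟨r, hr, hρr⟩ : ∃ r > 0, ρ ≤ algebraMap ℝ _ r := by
    obtain ⟨r, hr⟩ := (finite_real_spectrum (A := ρ)).bddAbove
    exact ⟨|r| + 1, by positivity, le_algebraMap_of_spectrum_le fun x hx =>
      (hr hx).trans (by linarith [le_abs_self r])⟩
  refine ⟨r / c, by positivity, ?_⟩
  calc ρ = star (1 - Q) * ρ * (1 - Q) := by simp [hQ, mul_sub, sub_mul, hρQ, hQρ]
    _ ≤ star (1 - Q) * algebraMap ℝ _ r * (1 - Q) := star_left_conjugate_le_conjugate hρr _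
    _ ≤ star (1 - Q) * ((r / c) • (σ + Q)) * (1 - Q) := by
        refine star_left_conjugate_le_conjugate ?_ _
        calc algebraMap ℝ _ r = (r / c) • algebraMap ℝ (Matrix n n 𝕜) c := by
              simp [Algebra.algebraMap_eq_smul_one, smul_smul, hc.ne']
          _ ≤ (r / c) • (σ + Q) := smul_le_smul_of_nonneg_left hcσQ (by positivity)
    _ = (r / c) • σ := by
        simp [hQ, mul_sub, sub_mul, mul_add, hσQ, hQσ, hQQ]

end kerProjection

end Matrix

theorem Dmax_eq_log_sSup_general {d : ℕ} (ρ σ : Matrix (Fin d) (Fin d) ℂ)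
    (hρ : ρ.PosSemidef) (hσ : σ.PosSemidef)
    (hsupp : ∀ v, σ *ᵥ v = 0 → ρ *ᵥ v = 0) :
    Dmax ρ σ =
      Real.logb 2 (sSup {r : ℝ | ∃ X : Matrix (Fin d) (Fin d) ℂ,
        X.PosSemidef ∧ (σ * X).trace.re ≤ 1 ∧ r = (ρ * X).trace.re}) := by
  have hdual (l : ℝ) : (l • σ - ρ).PosSemidef ↔
      ∀ X ∈ {X : Matrix (Fin d) (Fin d) ℂ | X.PosSemidef},
        ρ.reTraceMul X ≤ l * σ.reTraceMul X := by
    rw [← le_iff, hρ.1.le_iff_forall_re_trace_mul_le (hσ.1.smul (IsSelfAdjoint.all l))]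
    simp [trace_smul]
  obtain ⟨l, hl, hρσ⟩ := exists_le_smul_of_ker_le hρ.1 hσ hsupp
  simp_rw [Dmax, hdual]
  congr 1
  exact sInf_setOf_forall_le_mul_eq_sSup PosSemidef.zero (fun X hX t ht => hX.smul ht.le) _ _
    (fun X hX => (RCLike.nonneg_iff.mp (hσ.trace_mul_nonneg hX)).1) ⟨l, hl, (hdual l).mp hρσ⟩

/-- Variational formula for the max relative entropy:
`D_max(ρ‖σ) = log sup { tr(ρX) : X ≥ 0, tr(σX) ≤ 1 }`. -/
theorem Dmax_eq_log_sSup {d : ℕ} (ρ σ : Matrix (Fin d) (Fin d) ℂ)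
    (hρ : ρ.PosSemidef) (hσ : σ.PosSemidef) (hρ1 : ρ.trace = 1)
    (hsupp : ∀ v, σ *ᵥ v = 0 → ρ *ᵥ v = 0) :
    Dmax ρ σ =
      Real.logb 2 (sSup {r : ℝ | ∃ X : Matrix (Fin d) (Fin d) ℂ,
        X.PosSemidef ∧ (σ * X).trace.re ≤ 1 ∧ r = (ρ * X).trace.re}) :=
  Dmax_eq_log_sSup_general ρ σ hρ hσ hsupp
end

section
/- Let $P$ and $Q$ be probability distributions on a finite set with $Q(x)>0$ whenever $P(x)>0$, and let $\lambda > 0$, $1 < \alpha \leq 2$. Let $S = \{x : P(x) > \lambda Q(x)\}$. Then $\sum_{x \in S} (P(x) - \lambda Q(x)) \leq \lambda^{1-\alpha} \sum_x P(x)^{\alpha} Q(x)^{1-\alpha}$. -/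
open Finset

/-- The key identity is `λ^{1-α} p^α q^{1-α} = p (p / λq)^{α-1}`, and `p / λq ≥ 1`. -/
theorem le_rpow_one_sub_mul_rpow_mul_rpow_one_sub {l p q α : ℝ} (hl : 0 < l) (hq : 0 < q)
    (hlq : l * q ≤ p) (hα : 1 ≤ α) :
    p ≤ l ^ (1 - α) * (p ^ α * q ^ (1 - α)) := by
  have hlq_pos : 0 < l * q := mul_pos hl hq
  have hp : 0 < p := hlq_pos.trans_le hlq
  have hratio : 1 ≤ p / (l * q) := (one_le_div hlq_pos).mpr hlq
  calc p = p * 1 := (mul_one p).symm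
    _ ≤ p * (p / (l * q)) ^ (α - 1) :=
        mul_le_mul_of_nonneg_left (Real.one_le_rpow hratio (by linarith)) hp.le
    _ = l ^ (1 - α) * (p ^ α * q ^ (1 - α)) := by
        rw [Real.div_rpow hp.le hlq_pos.le, Real.mul_rpow hl.le hq.le, Real.rpow_sub hp,
          Real.rpow_one, show 1 - α = -(α - 1) by ring, Real.rpow_neg hl.le, Real.rpow_neg hq.le]
        field_simp

theorem sum_posPart_le_rpow_mul_sum_general {X : Type*} [Fintype X] (P Q : X → ℝ)
    (hQ0 : ∀ x, 0 ≤ Q x)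
    (hsupp : ∀ x, 0 < P x → 0 < Q x)
    (l α : ℝ) (hl : 0 < l) (hα : 1 < α) :
    ∑ x ∈ Finset.univ.filter (fun x => l * Q x < P x), (P x - l * Q x)
      ≤ l ^ (1 - α) *
        ∑ x ∈ Finset.univ.filter (fun x => 0 < P x), P x ^ α * Q x ^ (1 - α) := by
  have hpos : ∀ x, l * Q x < P x → 0 < P x := fun x hx =>
    (mul_nonneg hl.le (hQ0 x)).trans_lt hx
  rw [mul_sum]
  calc ∑ x ∈ univ.filter (fun x => l * Q x < P x), (P x - l * Q x)
      ≤ ∑ x ∈ univ.filter (fun x => l * Q x < P x), l ^ (1 - α) * (P x ^ α * Q x ^ (1 - α)) :=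
        sum_le_sum fun x hx => by
          have hlt := (mem_filter.mp hx).2
          have hbound :=
            le_rpow_one_sub_mul_rpow_mul_rpow_one_sub hl (hsupp x (hpos x hlt)) hlt.le hα.le
          linarith [mul_nonneg hl.le (hQ0 x)]
    _ ≤ ∑ x ∈ univ.filter (fun x => 0 < P x), l ^ (1 - α) * (P x ^ α * Q x ^ (1 - α)) :=
        sum_le_sum_of_subset_of_nonneg (monotone_filter_right _ fun x _ => hpos x) fun x hx _ => by
          have hPx := (mem_filter.mp hx).2
          have hQx := hQ0 x
          positivity

/-- For probability distributions `P, Q` with `supp P ⊆ supp Q`, `λ > 0` and `1 < α ≤ 2`: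
`∑_{x : P x > λ Q x} (P x - λ Q x) ≤ λ^{1-α} ∑_{x : P x > 0} P x ^ α Q x ^{1-α}`. -/
theorem sum_posPart_le_rpow_mul_sum {X : Type*} [Fintype X] (P Q : X → ℝ)
    (hP0 : ∀ x, 0 ≤ P x) (hQ0 : ∀ x, 0 ≤ Q x)
    (hP1 : ∑ x, P x = 1) (hQ1 : ∑ x, Q x = 1)
    (hsupp : ∀ x, 0 < P x → 0 < Q x)
    (l α : ℝ) (hl : 0 < l) (hα : 1 < α) (hα2 : α ≤ 2) :
    ∑ x ∈ Finset.univ.filter (fun x => l * Q x < P x), (P x - l * Q x)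
      ≤ l ^ (1 - α) *
        ∑ x ∈ Finset.univ.filter (fun x => 0 < P x), P x ^ α * Q x ^ (1 - α) :=
  sum_posPart_le_rpow_mul_sum_general P Q hQ0 hsupp l α hl hα
end

section
/- Let $P, Q$ be probability distributions on a finite set with $Q(x)>0$ whenever $P(x)>0$, and suppose $P(x) \leq \lambda Q(x)$ for all $x$, for some $\lambda \geq 1$. Then the relative entropy variance satisfies $V(P\|Q) = \sum_x P(x)\big(\log \tfrac{P(x)}{Q(x)} - D(P\|Q)\big)^2 + D(P\|Q)^2 = \sum_x P(x)\big(\log\tfrac{P(x)}{Q(x)}\big)^2 \leq (\log 3 + \log\lambda)^2$. -/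
/-!
On the support of `P` write `t = P x / Q x ≤ λ`. Where `t ≥ 1` the summand `P x (log t)²` is at
most `P x (log λ)²`; where `t < 1` it equals `Q x · t (log t)²`, and `t (ln t)² ≤ 4/e² ≤ (ln 3)²`
(write `t (ln t)² = (2 √t ln √t)²`), so `t (log t)² ≤ (log 3)²` in any base. Summing gives `V(P‖Q) ≤ (log λ)² + (log 3)² ≤ (log 3 + log λ)²`. The first identity is
the usual decomposition of a second moment into variance plus squared mean.
-/

open Finset Real

theorem Finset.sum_mul_sub_sq_add_sq {ι R : Type*} [CommRing R] (s : Finset ι) (w f : ι → R)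
    (hw : ∑ i ∈ s, w i = 1) :
    ∑ i ∈ s, w i * (f i - ∑ j ∈ s, w j * f j) ^ 2 + (∑ j ∈ s, w j * f j) ^ 2
      = ∑ i ∈ s, w i * f i ^ 2 := by
  set m := ∑ j ∈ s, w j * f j with hm
  have expand : ∀ i, w i * (f i - m) ^ 2 = w i * f i ^ 2 - 2 * m * (w i * f i) + m ^ 2 * w i :=
    fun i => by ring
  rw [sum_congr rfl fun i _ => expand i, sum_add_distrib, sum_sub_distrib, ← mul_sum, ← mul_sum,
    ← hm, hw]
  ring

namespace Real

theorem log_le_div_exp_one {y : ℝ} (hy : 0 < y) : log y ≤ y / exp 1 := by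
  have h := log_le_sub_one_of_pos (div_pos hy (exp_pos 1))
  rw [log_div hy.ne' (exp_pos 1).ne', log_exp] at h
  linarith

theorem negMulLog_le_exp_neg_one {u : ℝ} (hu : 0 ≤ u) : negMulLog u ≤ exp (-1) := by
  rcases hu.eq_or_lt with rfl | hu
  · simp [(exp_pos _).le]
  have h := log_le_div_exp_one (inv_pos.mpr hu)
  rw [log_inv] at h
  calc negMulLog u = u * -log u := by rw [negMulLog]; ring
    _ ≤ u * (u⁻¹ / exp 1) := by gcongr
    _ = exp (-1) := by rw [exp_neg]; field_simp

theorem mul_log_sq_le {t : ℝ} (h0 : 0 ≤ t) (h1 : t ≤ 1) : t * log t ^ 2 ≤ 4 * exp (-1) ^ 2 := by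
  set u := √t
  have hu0 : 0 ≤ u := sqrt_nonneg t
  have hut : u ^ 2 = t := sq_sqrt h0
  have hsq : t * log t ^ 2 = 4 * negMulLog u ^ 2 := by
    rw [← hut, log_pow, negMulLog]
    push_cast
    ring
  have hpos : 0 ≤ negMulLog u := negMulLog_nonneg hu0 (sqrt_le_one.mpr h1)
  rw [hsq]
  gcongr
  exact negMulLog_le_exp_neg_one hu0

theorem mul_logb_two_sq_le {t : ℝ} (h0 : 0 ≤ t) (h1 : t ≤ 1) :
    t * logb 2 t ^ 2 ≤ logb 2 3 ^ 2 := by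
  have hexp : exp (-1) ≤ 1 / 2 := by
    rw [exp_neg, inv_le_comm₀ (exp_pos 1) (by norm_num)]
    linarith [exp_one_gt_d9]
  have hlog3 : 1 ≤ log 3 := by
    rw [le_log_iff_exp_le (by norm_num)]
    linarith [exp_one_lt_d9]
  have hnat : t * log t ^ 2 ≤ log 3 ^ 2 := by
    calc t * log t ^ 2 ≤ 4 * exp (-1) ^ 2 := mul_log_sq_le h0 h1
      _ ≤ 4 * (1 / 2) ^ 2 := by gcongr
      _ ≤ log 3 ^ 2 := by nlinarith
  simp only [logb, div_pow, ← mul_div_assoc]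
  gcongr

theorem mul_logb_div_sq_le {p q l : ℝ} (hp : 0 < p) (hl : 1 ≤ l) (hpq : p ≤ l * q) :
    p * logb 2 (p / q) ^ 2 ≤ p * logb 2 l ^ 2 + q * logb 2 3 ^ 2 := by
  have hq : 0 < q := pos_of_mul_pos_right (hp.trans_le hpq) (by linarith)
  have ht : p / q ≤ l := (div_le_iff₀ hq).mpr hpq
  rcases le_or_gt 1 (p / q) with h1 | h1
  · have hlog0 : 0 ≤ logb 2 (p / q) := logb_nonneg one_lt_two h1
    have hlogl : logb 2 (p / q) ≤ logb 2 l := logb_le_logb_of_le one_lt_two (by positivity) ht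
    have : p * logb 2 (p / q) ^ 2 ≤ p * logb 2 l ^ 2 := by gcongr
    nlinarith [mul_nonneg hq.le (sq_nonneg (logb 2 3))]
  · have hsmall := mul_logb_two_sq_le (div_pos hp hq).le h1.le
    have hrw : p * logb 2 (p / q) ^ 2 = q * (p / q * logb 2 (p / q) ^ 2) := by
      field_simp
    have : q * (p / q * logb 2 (p / q) ^ 2) ≤ q * logb 2 3 ^ 2 := by gcongr
    nlinarith [mul_nonneg hp.le (sq_nonneg (logb 2 l))]

end Real

theorem relEntropyVariance_le_general {X : Type*} [Fintype X] (P Q : X → ℝ)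
    (hP0 : ∀ x, 0 ≤ P x) (hQ0 : ∀ x, 0 ≤ Q x)
    (hP1 : ∑ x, P x = 1) (hQ1 : ∑ x, Q x = 1)
    (l : ℝ) (hl : 1 ≤ l) (hle : ∀ x, P x ≤ l * Q x) :
    (∑ x ∈ Finset.univ.filter (fun x => 0 < P x),
        P x * (Real.logb 2 (P x / Q x) -
          ∑ y ∈ Finset.univ.filter (fun y => 0 < P y), P y * Real.logb 2 (P y / Q y)) ^ 2)
      + (∑ y ∈ Finset.univ.filter (fun y => 0 < P y), P y * Real.logb 2 (P y / Q y)) ^ 2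
      = ∑ x ∈ Finset.univ.filter (fun x => 0 < P x), P x * (Real.logb 2 (P x / Q x)) ^ 2
    ∧ ∑ x ∈ Finset.univ.filter (fun x => 0 < P x), P x * (Real.logb 2 (P x / Q x)) ^ 2
        ≤ (Real.logb 2 3 + Real.logb 2 l) ^ 2 := by
  set S := univ.filter fun x => 0 < P x
  have hPS : ∑ x ∈ S, P x = 1 :=
    hP1 ▸ sum_filter_of_ne fun x _ hx => (hP0 x).lt_of_ne' hx
  have hQS : ∑ x ∈ S, Q x ≤ 1 :=
    hQ1 ▸ sum_le_sum_of_subset_of_nonneg (subset_univ S) fun x _ _ => hQ0 x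
  refine ⟨sum_mul_sub_sq_add_sq S P _ hPS, ?_⟩
  have hA : 0 ≤ logb 2 l := logb_nonneg one_lt_two hl
  have hB : 0 ≤ logb 2 3 := logb_nonneg one_lt_two (by norm_num)
  calc ∑ x ∈ S, P x * logb 2 (P x / Q x) ^ 2
      ≤ ∑ x ∈ S, (P x * logb 2 l ^ 2 + Q x * logb 2 3 ^ 2) :=
        sum_le_sum fun x hx => mul_logb_div_sq_le (mem_filter.mp hx).2 hl (hle x)
    _ = logb 2 l ^ 2 + (∑ x ∈ S, Q x) * logb 2 3 ^ 2 := by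
        rw [sum_add_distrib, ← sum_mul, ← sum_mul, hPS, one_mul]
    _ ≤ (logb 2 3 + logb 2 l) ^ 2 := by nlinarith [sq_nonneg (logb 2 3)]

/-- If `P ≤ λ Q` pointwise with `λ ≥ 1`, the relative entropy variance satisfies
`V(P‖Q) = ∑ P (log(P/Q) - D)² + D² = ∑ P (log(P/Q))² ≤ (log 3 + log λ)²`. -/
theorem relEntropyVariance_le {X : Type*} [Fintype X] (P Q : X → ℝ)
    (hP0 : ∀ x, 0 ≤ P x) (hQ0 : ∀ x, 0 ≤ Q x)
    (hP1 : ∑ x, P x = 1) (hQ1 : ∑ x, Q x = 1)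
    (hsupp : ∀ x, 0 < P x → 0 < Q x)
    (l : ℝ) (hl : 1 ≤ l) (hle : ∀ x, P x ≤ l * Q x) :
    (∑ x ∈ Finset.univ.filter (fun x => 0 < P x),
        P x * (Real.logb 2 (P x / Q x) -
          ∑ y ∈ Finset.univ.filter (fun y => 0 < P y), P y * Real.logb 2 (P y / Q y)) ^ 2)
      + (∑ y ∈ Finset.univ.filter (fun y => 0 < P y), P y * Real.logb 2 (P y / Q y)) ^ 2
      = ∑ x ∈ Finset.univ.filter (fun x => 0 < P x), P x * (Real.logb 2 (P x / Q x)) ^ 2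
    ∧ ∑ x ∈ Finset.univ.filter (fun x => 0 < P x), P x * (Real.logb 2 (P x / Q x)) ^ 2
        ≤ (Real.logb 2 3 + Real.logb 2 l) ^ 2 :=
  relEntropyVariance_le_general P Q hP0 hQ0 hP1 hQ1 l hl hle
end

section
/- Let $\sigma$ be a positive semidefinite matrix with $m\, s(\sigma) \le \sigma \le M\, s(\sigma)$ for $0 < m < M$, where $s(\sigma)$ is the support projection. Let $\theta = \log M - \log m$ and let $l \geq 1$ be an integer. Then there exists a positive semidefinite matrix $\sigma'$ commuting with $\sigma$, with at most $l+1$ distinct nonzero eigenvalues, such that $2^{-\theta/l}\sigma \leq \sigma' \leq \sigma$. -/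
/-!
Take `σ' = f(σ)` in the functional calculus, where `f` rounds every positive number down to the
grid `2 ^ (r ℤ)` with `r = θ / l` and fixes `0`. Rounding down costs at most a factor `2 ^ (-r)`,
which gives `2 ^ (-r) σ ≤ σ' ≤ σ`. The nonzero spectrum of `σ` lies in `[m, M]`: on an
eigenvector with nonzero eigenvalue `P` acts as the identity, so `m P ≤ σ ≤ M P` compares the
eigenvalue with `m` and `M`. An interval of logarithmic length `θ = l r` meets at most `l + 1`
grid points.
-/

open Matrix ComplexOrder
open scoped MatrixOrder

section LogGrid

open Real Set

variable {r x : ℝ}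

lemma mul_floor_div_le (hr : 0 < r) (t : ℝ) : r * ⌊t / r⌋ ≤ t :=
  (le_div_iff₀' hr).mp (Int.floor_le _)

lemma sub_lt_mul_floor_div (hr : 0 < r) (t : ℝ) : t - r < r * ⌊t / r⌋ := by
  calc t - r = r * (t / r - 1) := by field_simp
    _ < r * ⌊t / r⌋ := mul_lt_mul_of_pos_left (Int.sub_one_lt_floor _) hr

noncomputable def logGridFloor (r x : ℝ) : ℝ :=
  if x ≤ 0 then 0 else 2 ^ (r * ⌊logb 2 x / r⌋)

lemma logGridFloor_nonneg (r x : ℝ) : 0 ≤ logGridFloor r x := by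
  unfold logGridFloor; split_ifs <;> positivity

lemma logGridFloor_zero (r : ℝ) : logGridFloor r 0 = 0 := if_pos le_rfl

lemma logGridFloor_of_pos (hx : 0 < x) : logGridFloor r x = 2 ^ (r * ⌊logb 2 x / r⌋) :=
  if_neg hx.not_ge

lemma logGridFloor_le (hr : 0 < r) (hx : 0 ≤ x) : logGridFloor r x ≤ x := by
  rcases hx.eq_or_lt with rfl | hx
  · rw [logGridFloor_zero]
  calc logGridFloor r x ≤ 2 ^ logb 2 x := by
        rw [logGridFloor_of_pos hx]
        exact rpow_le_rpow_of_exponent_le one_le_two (mul_floor_div_le hr _)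
    _ = x := rpow_logb two_pos (by norm_num) hx

lemma rpow_neg_mul_le_logGridFloor (hr : 0 < r) (hx : 0 ≤ x) :
    (2 : ℝ) ^ (-r) * x ≤ logGridFloor r x := by
  rcases hx.eq_or_lt with rfl | hx
  · rw [mul_zero, logGridFloor_zero]
  calc (2 : ℝ) ^ (-r) * x = 2 ^ (logb 2 x - r) := by
        rw [rpow_sub two_pos, rpow_neg zero_le_two, rpow_logb two_pos (by norm_num) hx,
          div_eq_inv_mul]
    _ ≤ logGridFloor r x := by
        rw [logGridFloor_of_pos hx]
        exact rpow_le_rpow_of_exponent_le one_le_two (sub_lt_mul_floor_div hr _).le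

lemma encard_logGridFloor_image_Icc {a b : ℝ} (ha : 0 < a) (hab : a < b) {l : ℕ} (hl : 0 < l) :
    (logGridFloor ((logb 2 b - logb 2 a) / l) '' Icc a b).encard ≤ l + 1 := by
  set r := (logb 2 b - logb 2 a) / l
  have hr : 0 < r := div_pos (sub_pos.mpr (logb_lt_logb one_lt_two ha hab)) (by positivity)
  set k₀ := ⌊logb 2 a / r⌋
  have hsub : logGridFloor r '' Icc a b ⊆ (fun k : ℤ => (2 : ℝ) ^ (r * k)) '' Icc k₀ (k₀ + l) := by
    rintro _ ⟨x, ⟨hax, hxb⟩, rfl⟩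
    have hx : 0 < x := ha.trans_le hax
    refine ⟨⌊logb 2 x / r⌋, ⟨?_, ?_⟩, (logGridFloor_of_pos hx).symm⟩
    · exact Int.floor_le_floor (div_le_div_of_nonneg_right
        (logb_le_logb_of_le one_lt_two ha hax) hr.le)
    · have hb : logb 2 b / r = logb 2 a / r + l := by
        rw [div_add' _ _ _ hr.ne', mul_div_cancel₀ _ (by positivity : (l : ℝ) ≠ 0),
          add_sub_cancel]
      rw [← Int.floor_add_natCast, ← hb]
      exact Int.floor_le_floor (div_le_div_of_nonneg_right
        (logb_le_logb_of_le one_lt_two hx hxb) hr.le)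
  calc (logGridFloor r '' Icc a b).encard
      ≤ ((fun k : ℤ => (2 : ℝ) ^ (r * k)) '' Icc k₀ (k₀ + l)).encard := Set.encard_le_encard hsub
    _ ≤ (Icc k₀ (k₀ + l)).encard := Set.encard_image_le _ _
    _ = l + 1 := by
      rw [← Finset.coe_Icc, Set.encard_coe_eq_coe_finsetCard, Int.card_Icc]
      norm_cast
      omega

end LogGrid

section Spectrum

variable {n 𝕜 : Type*} [Fintype n] [RCLike 𝕜]

lemma le_of_posSemidef_sub_of_mulVec_eq_smul {A B : Matrix n n 𝕜} (hAB : (A - B).PosSemidef)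
    {v : n → 𝕜} (hv : v ≠ 0) {a b : ℝ} (hA : A *ᵥ v = a • v) (hB : B *ᵥ v = b • v) : b ≤ a := by
  have hquad : star v ⬝ᵥ ((A - B) *ᵥ v) = ((a - b : ℝ) : 𝕜) * (star v ⬝ᵥ v) := by
    rw [sub_mulVec, hA, hB, ← sub_smul, dotProduct_smul, RCLike.real_smul_eq_coe_mul]
  have hpos : (0 : 𝕜) < star v ⬝ᵥ v := dotProduct_star_self_pos_iff.mpr hv
  have := hAB.dotProduct_mulVec_nonneg v
  rw [hquad] at this
  have hre := (RCLike.nonneg_iff.mp this).1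
  rw [RCLike.re_ofReal_mul] at hre
  exact sub_nonneg.mp ((mul_nonneg_iff_of_pos_right (RCLike.pos_iff.mp hpos).1).mp hre)

lemma spectrum_subset_insert_zero_Icc [DecidableEq n] {σ P : Matrix n n 𝕜} (hσ : σ.IsHermitian)
    (hP : P.IsHermitian) (hσP : σ * P = σ) {m M : ℝ} (hlow : (σ - m • P).PosSemidef)
    (hup : (M • P - σ).PosSemidef) : spectrum ℝ σ ⊆ insert 0 (Set.Icc m M) := by
  rw [hσ.spectrum_real_eq_range_eigenvalues]
  rintro _ ⟨i, rfl⟩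
  refine or_iff_not_imp_left.mpr fun h0 => ?_
  set v : n → 𝕜 := ⇑(hσ.eigenvectorBasis i)
  have hv : v ≠ 0 := fun h =>
    hσ.eigenvectorBasis.orthonormal.ne_zero i (by ext j; simpa using congrFun h j)
  have hσv : σ *ᵥ v = hσ.eigenvalues i • v := hσ.mulVec_eigenvectorBasis i
  have hPσ : P * σ = σ := by
    simpa only [conjTranspose_mul, hP.eq, hσ.eq] using congrArg conjTranspose hσP
  have hPv : P *ᵥ v = v := by
    have h : P *ᵥ (σ *ᵥ v) = σ *ᵥ v := by rw [mulVec_mulVec, hPσ]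
    rw [hσv, mulVec_smul] at h
    exact smul_right_injective _ h0 h
  have hPv' : ∀ c : ℝ, (c • P) *ᵥ v = c • v := fun c => by rw [smul_mulVec, hPv]
  exact ⟨le_of_posSemidef_sub_of_mulVec_eq_smul hlow hv hσv (hPv' m),
    le_of_posSemidef_sub_of_mulVec_eq_smul hup hv (hPv' M) hσv⟩

end Spectrum

theorem exists_truncation_general {d : ℕ} (σ P : Matrix (Fin d) (Fin d) ℂ)
    (hσ : σ.PosSemidef) (hP : P.IsHermitian)
    (hPsupp : σ * P = σ)
    (m M : ℝ) (hm : 0 < m) (hmM : m < M)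
    (hlow : (σ - m • P).PosSemidef) (hup : (M • P - σ).PosSemidef)
    (l : ℕ) (hl : 1 ≤ l) :
    ∃ (σ' : Matrix (Fin d) (Fin d) ℂ) (h' : σ'.PosSemidef),
      σ' * σ = σ * σ' ∧
      {μ : ℝ | μ ≠ 0 ∧ ∃ i, h'.1.eigenvalues i = μ}.ncard ≤ l + 1 ∧
      (σ' - ((2 : ℝ) ^ (-((Real.logb 2 M - Real.logb 2 m) / (l : ℝ)))) • σ).PosSemidef ∧
      (σ - σ').PosSemidef := by
  set r := (Real.logb 2 M - Real.logb 2 m) / (l : ℝ)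
  have hr : 0 < r := div_pos (sub_pos.mpr (Real.logb_lt_logb one_lt_two hm hmM)) (by positivity)
  have hspec := spectrum_subset_insert_zero_Icc hσ.1 hP hPsupp hlow hup
  have hspec_nonneg : ∀ x ∈ spectrum ℝ σ, 0 ≤ x := fun x hx =>
    (hspec hx).elim (·.ge) fun hx => hm.le.trans hx.1
  -- discharges the continuity side conditions of `cfc_mono` and `cfc_map_spectrum`
  have hcont : ContinuousOn (logGridFloor r) (spectrum ℝ σ) := (Set.toFinite _).continuousOn _
  set σ' := cfc (logGridFloor r) σ
  have h' : σ'.PosSemidef :=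
    nonneg_iff_posSemidef.mp (cfc_nonneg fun x _ => logGridFloor_nonneg r x)
  refine ⟨σ', h', ?_, ?_, ?_, ?_⟩
  · simpa only [cfc_id ℝ σ] using (cfc_commute_cfc (logGridFloor r) id σ).eq
  · have hsub : {μ : ℝ | μ ≠ 0 ∧ ∃ i, h'.1.eigenvalues i = μ} ⊆ logGridFloor r '' Set.Icc m M := by
      rintro _ ⟨hμ, i, rfl⟩
      obtain ⟨x, hx, hfx⟩ :=
        cfc_map_spectrum (logGridFloor r) σ ▸ h'.1.eigenvalues_mem_spectrum_real i
      rcases hspec hx with rfl | hx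
      · exact absurd (hfx ▸ logGridFloor_zero r) hμ
      · exact ⟨x, hx, hfx⟩
    have := (Set.ncard_le_encard _).trans ((Set.encard_le_encard hsub).trans
      (encard_logGridFloor_image_Icc hm hmM hl))
    exact_mod_cast this
  · rw [← nonneg_iff_posSemidef, sub_nonneg, ← cfc_smul_id (R := ℝ) _ σ]
    exact cfc_mono fun x hx => rpow_neg_mul_le_logGridFloor hr (hspec_nonneg x hx)
  · rw [← le_iff]
    conv_rhs => rw [← cfc_id' ℝ σ]
    exact cfc_mono fun x hx => logGridFloor_le hr (hspec_nonneg x hx)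

/-- Spectrum truncation: if `m s(σ) ≤ σ ≤ M s(σ)` (with `s(σ)` the support projection,
given here as a projection `P` with `σ P = σ`), then for every integer `l ≥ 1` there is a
positive semidefinite `σ'` commuting with `σ`, with at most `l + 1` distinct nonzero
eigenvalues, such that `2^{-θ/l} σ ≤ σ' ≤ σ` where `θ = log M - log m`. -/
theorem exists_truncation {d : ℕ} (σ P : Matrix (Fin d) (Fin d) ℂ)
    (hσ : σ.PosSemidef) (hP : P.IsHermitian) (hPproj : P * P = P)
    (hPsupp : σ * P = σ)
    (m M : ℝ) (hm : 0 < m) (hmM : m < M)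
    (hlow : (σ - m • P).PosSemidef) (hup : (M • P - σ).PosSemidef)
    (l : ℕ) (hl : 1 ≤ l) :
    ∃ (σ' : Matrix (Fin d) (Fin d) ℂ) (h' : σ'.PosSemidef),
      σ' * σ = σ * σ' ∧
      {μ : ℝ | μ ≠ 0 ∧ ∃ i, h'.1.eigenvalues i = μ}.ncard ≤ l + 1 ∧
      (σ' - ((2 : ℝ) ^ (-((Real.logb 2 M - Real.logb 2 m) / (l : ℝ)))) • σ).PosSemidef ∧
      (σ - σ').PosSemidef :=
  exists_truncation_general σ P hσ hP hPsupp m M hm hmM hlow hup l hl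
end
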